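/- arXiv:math/0609766 — 2 statements merged into one kernel-verified Lean document; each statement's English description precedes it below -/
import Mathlib

section
/- Let (y_n) be a sequence in ℤ^d with y_n/n → y ∈ ℝ^d \ {0}. Then for every λ > 0 and all real numbers γ, δ with γ < ∂⁺_λ β_λ(y) ≤ ∂⁻_λ β_λ(y) < δ (where ∂⁺ and ∂⁻ denote the right and left derivatives of λ ↦ β_λ(y)), one has lim_{n→∞} P^{y_n}_λ[H(y_n)/n ∈ [γ, δ]] = 1, where P^y_λ is the probability measure with density exp(−λH(y) − Φ(H(y))) 1_{{H(y)<∞}} / b_λ(y)-normalization with respect to P. -/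
open MeasureTheory ProbabilityTheory Filter Topology Set Pointwise

noncomputable section

namespace RWRP

/-- The `2d` unit steps in `ℤ^d`. -/
def unitSteps (d : ℕ) : Finset (Fin d → ℤ) :=
  (Finset.univ : Finset (Fin d × Bool)).image
    (fun p => fun j => if j = p.1 then (if p.2 then 1 else -1) else 0)

/-- The uniform distribution on the `2d` unit steps of `ℤ^d`. -/
def stepDist (d : ℕ) : Measure (Fin d → ℤ) :=
  ((unitSteps d).card : ENNReal)⁻¹ • ∑ s ∈ unitSteps d, Measure.dirac s

/-- `S` is the symmetric nearest-neighbor random walk on `ℤ^d` under `P`, started at the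
origin: `S 0 = 0` and the increments are i.i.d., uniformly distributed on the unit steps. -/
def IsSRW {d : ℕ} {Ω : Type*} [MeasurableSpace Ω] (P : Measure Ω)
    (S : ℕ → Ω → Fin d → ℤ) : Prop :=
  (∀ ω, S 0 ω = 0) ∧ (∀ n, Measurable (S n)) ∧
    (∀ n, Measure.map (fun ω => S (n + 1) ω - S n ω) P = stepDist d) ∧
    iIndepFun (fun n ω => S (n + 1) ω - S n ω) P

/-- The `ℓ¹`-norm of a point of `ℤ^d`. -/
def norm1Z {d : ℕ} (x : Fin d → ℤ) : ℝ := ∑ i, |(x i : ℝ)|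

/-- The `ℓ¹`-norm on `ℝ^d`. -/
def norm1R {d : ℕ} (x : Fin d → ℝ) : ℝ := ∑ i, |x i|

/-- The embedding `ℤ^d → ℝ^d`. -/
def zToR {d : ℕ} (x : Fin d → ℤ) : Fin d → ℝ := fun i => (x i : ℝ)

/-- Euclidean scalar product on `ℝ^d`. -/
def dotR {d : ℕ} (h x : Fin d → ℝ) : ℝ := ∑ i, h i * x i

/-- `f` is a norm on `ℝ^d`. -/
def IsNorm {d : ℕ} (f : (Fin d → ℝ) → ℝ) : Prop :=
  (∀ x, 0 ≤ f x) ∧ (∀ x, f x = 0 ↔ x = 0) ∧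
    (∀ (c : ℝ) (x), f (c • x) = |c| * f x) ∧ ∀ x y, f (x + y) ≤ f x + f y

/-- The dual norm `f*(ℓ) = sup_{x ≠ 0} (ℓ·x)/f(x)`. -/
def dualNorm {d : ℕ} (f : (Fin d → ℝ) → ℝ) (ℓ : Fin d → ℝ) : ℝ :=
  ⨆ x : {x : Fin d → ℝ // x ≠ 0}, dotR ℓ x.1 / f x.1

/-- Number of visits of the walk to `x` during `1 ≤ m ≤ n`. -/
def localTime {d : ℕ} {Ω : Type*} (S : ℕ → Ω → Fin d → ℤ) (x : Fin d → ℤ) (n : ℕ)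
    (ω : Ω) : ℕ :=
  ((Finset.Icc 1 n).filter (fun m => S m ω = x)).card

/-- Time of the first visit of the walk to the site `x`. -/
def hitTime {d : ℕ} {Ω : Type*} (S : ℕ → Ω → Fin d → ℤ) (x : Fin d → ℤ) (ω : Ω) : ℕ :=
  sInf {n : ℕ | S n ω = x}

/-- The event that the walk ever visits the site `x`, i.e. `H(x) < ∞`. -/
def hits {d : ℕ} {Ω : Type*} (S : ℕ → Ω → Fin d → ℤ) (x : Fin d → ℤ) : Set Ω :=
  {ω | ∃ n, S n ω = x}

/-- Entrance time of the walk into the half-space `{x : ℓ·x ≥ u}`. -/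
def hitHalf {d : ℕ} {Ω : Type*} (S : ℕ → Ω → Fin d → ℤ) (ℓ : Fin d → ℝ) (u : ℝ)
    (ω : Ω) : ℕ :=
  sInf {n : ℕ | u ≤ dotR ℓ (zToR (S n ω))}

/-- The annealed path potential `Φ(n) = Σ_{x ∈ ℤ^d} φ(l_x(n))`. -/
def annPotential {d : ℕ} {Ω : Type*} (φ : ℝ → ℝ) (S : ℕ → Ω → Fin d → ℤ) (n : ℕ)
    (ω : Ω) : ℝ :=
  ∑' x : Fin d → ℤ, φ (localTime S x n ω)

/-- Assumptions (An) on the annealed potential shape function `φ`. -/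
def IsGoodPhi (φ : ℝ → ℝ) : Prop :=
  φ 0 = 0 ∧ (∀ t, 0 ≤ t → 0 ≤ φ t) ∧ MonotoneOn φ (Ici 0) ∧ ConcaveOn ℝ (Ici 0) φ ∧
    (∃ t, 0 ≤ t ∧ φ t ≠ 0) ∧ Tendsto (fun t => φ t / t) atTop (𝓝 0)

/-- The annealed two-point function `b_λ(x)`. -/
def twoPointB {d : ℕ} {Ω : Type*} [MeasurableSpace Ω] (P : Measure Ω) (φ : ℝ → ℝ)
    (S : ℕ → Ω → Fin d → ℤ) (lam : ℝ) (x : Fin d → ℤ) : ℝ :=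
  -Real.log (∫ ω, Set.indicator (hits S x)
    (fun ω' => Real.exp (-(lam * (hitTime S x ω' : ℝ))
      - annPotential φ S (hitTime S x ω') ω')) ω ∂P)

/-- The quenched path potential `Ψ(n,ω) = Σ_{1 ≤ m ≤ n} V_{S(m)}(ω)`. -/
def quPotential {d : ℕ} {Ω Ωe : Type*} (V : (Fin d → ℤ) → Ωe → ℝ)
    (S : ℕ → Ω → Fin d → ℤ) (n : ℕ) (ωe : Ωe) (ω : Ω) : ℝ :=
  ∑ m ∈ Finset.Icc 1 n, V (S m ω) ωe

/-- The quenched two-point function `a_λ(x,ω)`. -/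
def twoPointA {d : ℕ} {Ω Ωe : Type*} [MeasurableSpace Ω] (P : Measure Ω)
    (V : (Fin d → ℤ) → Ωe → ℝ) (S : ℕ → Ω → Fin d → ℤ) (lam : ℝ) (x : Fin d → ℤ)
    (ωe : Ωe) : ℝ :=
  -Real.log (∫ ω, Set.indicator (hits S x)
    (fun ω' => Real.exp (-(lam * (hitTime S x ω' : ℝ))
      - quPotential V S (hitTime S x ω') ωe ω')) ω ∂P)

/-- Assumptions (Qu) on the random potential `𝕍 = (V_x)`: i.i.d., nonnegative, nontrivial,
in `L^d`, with essential infimum `0`. -/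
def IsIIDPotential {d : ℕ} {Ωe : Type*} [MeasurableSpace Ωe] (μ : Measure Ωe)
    (V : (Fin d → ℤ) → Ωe → ℝ) : Prop :=
  (∀ x, Measurable (V x)) ∧
    (∀ x, ∀ᵐ ωe ∂μ, 0 ≤ V x ωe) ∧
    iIndepFun V μ ∧
    (∀ x, Measure.map (V x) μ = Measure.map (V 0) μ) ∧
    (¬∃ c : ℝ, V 0 =ᵐ[μ] fun _ => c) ∧
    MemLp (V 0) d μ ∧
    essInf (V 0) μ = 0

/-- The quenched shape theorem property for the family `α` of Lyapunov norms:
`a_λ(x_k, ·)/α_λ(x_k) → 1` almost surely along any `‖x_k‖₁ → ∞`. -/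
def QuShape {d : ℕ} {Ω Ωe : Type*} [MeasurableSpace Ω] [MeasurableSpace Ωe]
    (P : Measure Ω) (μ : Measure Ωe) (V : (Fin d → ℤ) → Ωe → ℝ)
    (S : ℕ → Ω → Fin d → ℤ) (α : ℝ → (Fin d → ℝ) → ℝ) : Prop :=
  ∀ lam : ℝ, 0 ≤ lam → ∃ F : Set Ωe, μ Fᶜ = 0 ∧
    ∀ ωe ∈ F, ∀ xs : ℕ → Fin d → ℤ, Tendsto (fun k => norm1Z (xs k)) atTop atTop →
      Tendsto (fun k => twoPointA P V S lam (xs k) ωe / α lam (zToR (xs k))) atTop (𝓝 1)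

/-- The annealed shape theorem property for the family `β` of Lyapunov norms:
`b_λ(x_k)/β_λ(x_k) → 1` along any `‖x_k‖₁ → ∞`. -/
def AnShape {d : ℕ} {Ω : Type*} [MeasurableSpace Ω] (P : Measure Ω) (φ : ℝ → ℝ)
    (S : ℕ → Ω → Fin d → ℤ) (β : ℝ → (Fin d → ℝ) → ℝ) : Prop :=
  ∀ lam : ℝ, 0 ≤ lam → ∀ xs : ℕ → Fin d → ℤ,
    Tendsto (fun k => norm1Z (xs k)) atTop atTop →
      Tendsto (fun k => twoPointB P φ S lam (xs k) / β lam (zToR (xs k))) atTop (𝓝 1)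

/-- The rate function `x ↦ sup_{λ ≥ 0} (β_λ(x) − λ)`, with values in `EReal`. -/
def rateFn {d : ℕ} (β : ℝ → (Fin d → ℝ) → ℝ) (x : Fin d → ℝ) : EReal :=
  ⨆ (lam : ℝ) (_ : 0 ≤ lam), ((β lam x - lam : ℝ) : EReal)

/-- The free energy `sup_{x ∈ ℝ^d} (h·x − I(x))`, with values in `EReal`. -/
def freeEnergySup {d : ℕ} (β : ℝ → (Fin d → ℝ) → ℝ) (h : Fin d → ℝ) : EReal :=
  ⨆ x : Fin d → ℝ, ((dotR h x : ℝ) : EReal) - rateFn β x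

/-- The tilted rate function `x ↦ I(x) − h·x + sup_y (h·y − I(y))`. -/
def tiltedRate {d : ℕ} (β : ℝ → (Fin d → ℝ) → ℝ) (h x : Fin d → ℝ) : EReal :=
  rateFn β x - ((dotR h x : ℝ) : EReal) + freeEnergySup β h

/-- The annealed partition function `Z_n^h`. -/
def Zan {d : ℕ} {Ω : Type*} [MeasurableSpace Ω] (P : Measure Ω) (φ : ℝ → ℝ)
    (S : ℕ → Ω → Fin d → ℤ) (h : Fin d → ℝ) (n : ℕ) : ℝ :=
  ∫ ω, Real.exp (dotR h (zToR (S n ω)) - annPotential φ S n ω) ∂P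

/-- The annealed path measure `Q_n^h`, as an `ℝ≥0∞`-valued set function. -/
def Qan {d : ℕ} {Ω : Type*} [MeasurableSpace Ω] (P : Measure Ω) (φ : ℝ → ℝ)
    (S : ℕ → Ω → Fin d → ℤ) (h : Fin d → ℝ) (n : ℕ) (B : Set Ω) : ENNReal :=
  (∫⁻ ω in B, ENNReal.ofReal (Real.exp (dotR h (zToR (S n ω)) - annPotential φ S n ω)) ∂P) /
    ∫⁻ ω, ENNReal.ofReal (Real.exp (dotR h (zToR (S n ω)) - annPotential φ S n ω)) ∂P

/-- The quenched partition function `Z_{n,ω}^h`. -/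
def Zqu {d : ℕ} {Ω Ωe : Type*} [MeasurableSpace Ω] (P : Measure Ω)
    (V : (Fin d → ℤ) → Ωe → ℝ) (S : ℕ → Ω → Fin d → ℤ) (h : Fin d → ℝ) (n : ℕ)
    (ωe : Ωe) : ℝ :=
  ∫ ω, Real.exp (dotR h (zToR (S n ω)) - quPotential V S n ωe ω) ∂P

/-- The quenched path measure `Q_{n,ω}^h`, as an `ℝ≥0∞`-valued set function. -/
def Qqu {d : ℕ} {Ω Ωe : Type*} [MeasurableSpace Ω] (P : Measure Ω)
    (V : (Fin d → ℤ) → Ωe → ℝ) (S : ℕ → Ω → Fin d → ℤ) (h : Fin d → ℝ) (n : ℕ)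
    (ωe : Ωe) (B : Set Ω) : ENNReal :=
  (∫⁻ ω in B, ENNReal.ofReal (Real.exp (dotR h (zToR (S n ω)) - quPotential V S n ωe ω)) ∂P) /
    ∫⁻ ω, ENNReal.ofReal (Real.exp (dotR h (zToR (S n ω)) - quPotential V S n ωe ω)) ∂P

/-- The weight `exp(−λH(y) − Φ(H(y)))` defining the path measure `P^y_λ`. -/
def hitWeight {d : ℕ} {Ω : Type*} (φ : ℝ → ℝ) (S : ℕ → Ω → Fin d → ℤ)
    (y : Fin d → ℤ) (lam : ℝ) : Ω → ℝ :=
  fun ω => Real.exp (-(lam * (hitTime S y ω : ℝ)) - annPotential φ S (hitTime S y ω) ω)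

/-- The probability measure `P^y_λ` with density
`exp(−λH(y) − Φ(H(y))) 1_{H(y)<∞}` (normalized) with respect to `P`,
evaluated on a set `B`. -/
def hitProb {d : ℕ} {Ω : Type*} [MeasurableSpace Ω] (P : Measure Ω) (φ : ℝ → ℝ)
    (S : ℕ → Ω → Fin d → ℤ) (y : Fin d → ℤ) (lam : ℝ) (B : Set Ω) : ℝ :=
  (∫ ω, Set.indicator (hits S y ∩ B) (hitWeight φ S y lam) ω ∂P) /
    ∫ ω, Set.indicator (hits S y) (hitWeight φ S y lam) ω ∂P

/-!
Chernoff bounds on the tilted measures. Since `exp (-λH) = exp (-(λ - t) H) exp (-tH)`, on the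
event `{H(y_n) > δn}` with `t < λ` the weight of `P^{y_n}_λ` is at most `exp (-(λ - t) δ n)`
times that of `P^{y_n}_t`, so
`P^{y_n}_λ[H(y_n) > δn] ≤ exp (b_λ(y_n) - b_t(y_n) - (λ - t) δ n)`.
By the shape theorem the exponent is `n (β_λ(y) - β_t(y) - (λ - t) δ + o(1))`, which tends to
`-∞` as soon as `δ` exceeds the slope of `β_·(y)` between `t` and `λ`; such `t < λ` exists
because the left derivative at `λ` is `< δ`. The event `{H(y_n) < γn}` is handled in the same
way with some `t > λ`.
-/

lemma le_indicator_add_indicator_add_indicator {α : Type*} {f : α → ℝ} (hf : 0 ≤ f)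
    {A B C : Set α} (hcover : Aᶜ ⊆ B ∪ C) (a : α) :
    f a ≤ A.indicator f a + B.indicator f a + C.indicator f a := by
  classical
  have h0 : 0 ≤ f a := hf a
  rw [indicator_apply, indicator_apply, indicator_apply]
  split_ifs <;> first | linarith | exact absurd (hcover ‹a ∉ A›) (by simp [*])

lemma hitTime_preimage_singleton {d : ℕ} {Ω : Type*} (S : ℕ → Ω → Fin d → ℤ)
    (x : Fin d → ℤ) (k : ℕ) :
    hitTime S x ⁻¹' {k} =
      {ω | S k ω = x ∧ ∀ m < k, S m ω ≠ x} ∪ {ω | k = 0 ∧ ∀ n, S n ω ≠ x} := by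
  ext ω
  by_cases h : ∃ n, S n ω = x
  · simp only [mem_preimage, mem_singleton_iff, mem_union, mem_ofPred_eq, hitTime,
      not_forall_not.2 h, and_false, or_false]
    constructor
    · rintro rfl
      exact ⟨Nat.sInf_mem h, fun m hm => Nat.notMem_of_lt_sInf hm⟩
    · rintro ⟨hk, hmin⟩
      exact IsLeast.csInf_eq ⟨hk, fun m hm => not_lt.1 fun hlt => hmin m hlt hm⟩
  · push Not at h
    simpa [hitTime, h] using eq_comm

lemma measurable_hitTime {d : ℕ} {Ω : Type*} [MeasurableSpace Ω] {S : ℕ → Ω → Fin d → ℤ}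
    (hS : ∀ n, Measurable (S n)) (x : Fin d → ℤ) : Measurable (hitTime S x) := by
  refine measurable_to_countable' fun k => ?_
  rw [hitTime_preimage_singleton]
  measurability

/-- The normalization `Z^y_λ` of `P^y_λ`. -/
def hitPartition {d : ℕ} {Ω : Type*} [MeasurableSpace Ω] (P : Measure Ω) (φ : ℝ → ℝ)
    (S : ℕ → Ω → Fin d → ℤ) (y : Fin d → ℤ) (lam : ℝ) : ℝ :=
  ∫ ω, (hits S y).indicator (hitWeight φ S y lam) ω ∂P

section TiltedMeasure

variable {d : ℕ} {Ω : Type*} {φ : ℝ → ℝ} {S : ℕ → Ω → Fin d → ℤ} {y : Fin d → ℤ}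

lemma hitWeight_nonneg (l : ℝ) (ω : Ω) : 0 ≤ hitWeight φ S y l ω := (Real.exp_pos _).le

lemma indicator_hitWeight_nonneg (A : Set Ω) (l : ℝ) (ω : Ω) :
    0 ≤ A.indicator (hitWeight φ S y l) ω :=
  indicator_nonneg (fun ω _ => hitWeight_nonneg l ω) ω

lemma hitWeight_eq_exp_mul (l t : ℝ) (ω : Ω) :
    hitWeight φ S y l ω = Real.exp (-((l - t) * hitTime S y ω)) * hitWeight φ S y t ω := by
  simp only [hitWeight, ← Real.exp_add]
  ring_nf

variable [MeasurableSpace Ω] {P : Measure Ω}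

lemma twoPointB_eq_neg_log_hitPartition (l : ℝ) :
    twoPointB P φ S l y = -Real.log (hitPartition P φ S y l) := rfl

lemma hitProb_nonneg (l : ℝ) (B : Set Ω) : 0 ≤ hitProb P φ S y l B :=
  div_nonneg (integral_nonneg (indicator_hitWeight_nonneg _ l))
    (integral_nonneg (indicator_hitWeight_nonneg _ l))

lemma hitProb_le_one (l : ℝ) (B : Set Ω) : hitProb P φ S y l B ≤ 1 := by
  by_cases hint : Integrable ((hits S y).indicator (hitWeight φ S y l)) P
  · refine div_le_one_of_le₀ (integral_mono_of_nonneg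
      (ae_of_all _ (indicator_hitWeight_nonneg _ l)) hint (ae_of_all _ fun ω => ?_))
      (integral_nonneg (indicator_hitWeight_nonneg _ l))
    exact indicator_le_indicator_of_subset inter_subset_left (hitWeight_nonneg l) ω
  · simp [hitProb, integral_undef hint]

/-- Since `Real.log 0 = 0`, a vanishing partition function would give `b_λ(y) = 0`. -/
lemma hitPartition_pos_of_twoPointB_ne_zero {l : ℝ} (h : twoPointB P φ S l y ≠ 0) :
    0 < hitPartition P φ S y l := by
  refine (integral_nonneg (indicator_hitWeight_nonneg _ l) : 0 ≤ hitPartition P φ S y l).lt_of_ne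
    fun hZ => h ?_
  rw [twoPointB_eq_neg_log_hitPartition, show hitPartition P φ S y l = 0 from hZ.symm,
    Real.log_zero, neg_zero]

lemma hitPartition_eq_exp_neg_twoPointB {l : ℝ} (h : 0 < hitPartition P φ S y l) :
    hitPartition P φ S y l = Real.exp (-twoPointB P φ S l y) := by
  rw [twoPointB_eq_neg_log_hitPartition, neg_neg, Real.exp_log h]

lemma integral_indicator_hitWeight_le {l t c : ℝ} {E : Set Ω}
    (hint : Integrable ((hits S y).indicator (hitWeight φ S y t)) P)
    (hE : ∀ ω ∈ E, c ≤ (l - t) * hitTime S y ω) :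
    ∫ ω, (hits S y ∩ E).indicator (hitWeight φ S y l) ω ∂P ≤
      Real.exp (-c) * hitPartition P φ S y t := by
  rw [hitPartition, ← integral_const_mul]
  refine integral_mono_of_nonneg (ae_of_all _ (indicator_hitWeight_nonneg _ l))
    (hint.const_mul _) (ae_of_all _ fun ω => ?_)
  dsimp only
  by_cases hω : ω ∈ hits S y ∩ E
  · rw [indicator_of_mem hω, indicator_of_mem hω.1, hitWeight_eq_exp_mul l t]
    exact mul_le_mul_of_nonneg_right (Real.exp_le_exp.2 (by linarith [hE ω hω.2]))
      (hitWeight_nonneg t ω)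
  · rw [indicator_of_notMem hω]
    exact mul_nonneg (Real.exp_pos _).le (indicator_hitWeight_nonneg _ t ω)

lemma hitProb_eq_integral_indicator_div (l : ℝ) (B : Set Ω) :
    hitProb P φ S y l B =
      (∫ ω, B.indicator ((hits S y).indicator (hitWeight φ S y l)) ω ∂P) /
        hitPartition P φ S y l := by
  rw [indicator_indicator, inter_comm]
  rfl

lemma one_sub_le_hitProb_of_compl_subset {l : ℝ} (hZ : 0 < hitPartition P φ S y l)
    {A B C : Set Ω} (hA : MeasurableSet A) (hB : MeasurableSet B) (hC : MeasurableSet C)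
    (hcover : Aᶜ ⊆ B ∪ C) :
    1 - (hitProb P φ S y l B + hitProb P φ S y l C) ≤ hitProb P φ S y l A := by
  set F := (hits S y).indicator (hitWeight φ S y l)
  have hint : Integrable F P := .of_integral_ne_zero hZ.ne'
  have hsum : hitPartition P φ S y l ≤
      (∫ ω, A.indicator F ω ∂P) + (∫ ω, B.indicator F ω ∂P) + ∫ ω, C.indicator F ω ∂P := by
    have iAB := (hint.indicator hA).add (hint.indicator hB)
    calc hitPartition P φ S y l ≤ ∫ ω, (A.indicator F + B.indicator F + C.indicator F) ω ∂P :=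
          integral_mono hint (iAB.add (hint.indicator hC))
            (le_indicator_add_indicator_add_indicator (indicator_hitWeight_nonneg _ l) hcover)
      _ = _ := by
          rw [integral_add' iAB (hint.indicator hC), integral_add' (hint.indicator hA)
            (hint.indicator hB)]
  simp only [hitProb_eq_integral_indicator_div]
  rwa [sub_le_iff_le_add, ← add_assoc, ← add_div, ← add_div, le_div_iff₀ hZ, one_mul]

end TiltedMeasure

lemma IsNorm.pos {d : ℕ} {f : (Fin d → ℝ) → ℝ} (hf : IsNorm f) {x : Fin d → ℝ} (hx : x ≠ 0) :
    0 < f x :=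
  (hf.1 x).lt_of_ne fun h => hx ((hf.2.1 x).1 h.symm)

lemma IsNorm.convexOn {d : ℕ} {f : (Fin d → ℝ) → ℝ} (hf : IsNorm f) : ConvexOn ℝ univ f := by
  refine ⟨convex_univ, fun x _ z _ a b ha hb _ => ?_⟩
  calc f (a • x + b • z) ≤ f (a • x) + f (b • z) := hf.2.2.2 _ _
    _ = a • f x + b • f z := by rw [hf.2.2.1, hf.2.2.1, abs_of_nonneg ha, abs_of_nonneg hb]; rfl

lemma IsNorm.continuous {d : ℕ} {f : (Fin d → ℝ) → ℝ} (hf : IsNorm f) : Continuous f :=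
  continuousOn_univ.1 (hf.convexOn.continuousOn isOpen_univ)

lemma norm1Z_eq_mul_norm1R {d : ℕ} (x : Fin d → ℤ) {n : ℕ} (hn : 0 < n) :
    norm1Z x = n * norm1R (fun i => (x i : ℝ) / n) := by
  have hn' : (0 : ℝ) < n := Nat.cast_pos.2 hn
  simp only [norm1Z, norm1R, Finset.mul_sum, abs_div, abs_of_pos hn']
  exact Finset.sum_congr rfl fun i _ => (mul_div_cancel₀ _ hn'.ne').symm

lemma tendsto_norm1Z_atTop {d : ℕ} {ys : ℕ → Fin d → ℤ} {y : Fin d → ℝ} (hy : y ≠ 0)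
    (hys : Tendsto (fun n : ℕ => fun i => ((ys n i : ℝ) / n)) atTop (𝓝 y)) :
    Tendsto (fun n => norm1Z (ys n)) atTop atTop := by
  have hpos : 0 < norm1R y := by
    obtain ⟨i, hi⟩ := Function.ne_iff.1 hy
    exact (abs_pos.2 hi).trans_le
      (Finset.single_le_sum (fun j _ => abs_nonneg (y j)) (Finset.mem_univ i))
  have hcont : Continuous (norm1R (d := d)) := by unfold norm1R; fun_prop
  refine (tendsto_natCast_atTop_atTop.atTop_mul_pos hpos ((hcont.tendsto y).comp hys)).congr' ?_
  filter_upwards [eventually_gt_atTop 0] with n hn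
  exact (norm1Z_eq_mul_norm1R (ys n) hn).symm

section Shape

variable {d : ℕ} {Ω : Type*} [MeasurableSpace Ω] {P : Measure Ω} {φ : ℝ → ℝ}
  {S : ℕ → Ω → Fin d → ℤ} {β : ℝ → (Fin d → ℝ) → ℝ} {ys : ℕ → Fin d → ℤ} {y : Fin d → ℝ}
  {l : ℝ}

lemma AnShape.tendsto_twoPointB_div (hβshape : AnShape P φ S β) (hl : 0 ≤ l) (hβ : IsNorm (β l))
    (hy : y ≠ 0) (hys : Tendsto (fun n : ℕ => fun i => ((ys n i : ℝ) / n)) atTop (𝓝 y)) :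
    Tendsto (fun n : ℕ => twoPointB P φ S l (ys n) / n) atTop (𝓝 (β l y)) := by
  have hscaled : Tendsto (fun n : ℕ => β l (zToR (ys n)) / n) atTop (𝓝 (β l y)) := by
    refine ((hβ.continuous.tendsto y).comp hys).congr' ?_
    filter_upwards [eventually_gt_atTop 0] with n hn
    have hsmul : (fun i => (ys n i : ℝ) / n) = (n : ℝ)⁻¹ • zToR (ys n) := by
      ext i
      simp [zToR, div_eq_inv_mul]
    rw [Function.comp_apply, hsmul, hβ.2.2.1, abs_inv, Nat.abs_cast, inv_mul_eq_div]
  have hne : ∀ᶠ n : ℕ in atTop, β l (zToR (ys n)) ≠ 0 := by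
    filter_upwards [hscaled.eventually (eventually_gt_nhds (hβ.pos hy))] with n hn h0
    simp [h0] at hn
  have hlim := (hβshape l hl ys (tendsto_norm1Z_atTop hy hys)).mul hscaled
  rw [one_mul] at hlim
  refine hlim.congr' ?_
  filter_upwards [hne] with n hn
  field_simp

lemma AnShape.eventually_hitPartition_pos (hβshape : AnShape P φ S β) (hl : 0 ≤ l)
    (hβ : IsNorm (β l)) (hy : y ≠ 0)
    (hys : Tendsto (fun n : ℕ => fun i => ((ys n i : ℝ) / n)) atTop (𝓝 y)) :
    ∀ᶠ n in atTop, 0 < hitPartition P φ S (ys n) l := by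
  filter_upwards [(hβshape.tendsto_twoPointB_div hl hβ hy hys).eventually
    (eventually_gt_nhds (hβ.pos hy))] with n hn
  exact hitPartition_pos_of_twoPointB_ne_zero fun h => by simp [h] at hn

end Shape

lemma eventually_mul_sub_lt_of_lt_derivWithin_Ioi {f : ℝ → ℝ} {x κ : ℝ}
    (hf : DifferentiableWithinAt ℝ f (Ioi x) x) (hκ : κ < derivWithin f (Ioi x) x) :
    ∀ᶠ t in 𝓝[>] x, κ * (t - x) < f t - f x := by
  have hslope := (hasDerivWithinAt_iff_tendsto_slope' self_notMem_Ioi).1 hf.hasDerivWithinAt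
  filter_upwards [hslope.eventually (eventually_gt_nhds hκ), self_mem_nhdsWithin]
    with t ht (hxt : x < t)
  rwa [slope_def_field, lt_div_iff₀ (sub_pos.2 hxt)] at ht

lemma eventually_mul_sub_lt_of_derivWithin_Iio_lt {f : ℝ → ℝ} {x κ : ℝ}
    (hf : DifferentiableWithinAt ℝ f (Iio x) x) (hκ : derivWithin f (Iio x) x < κ) :
    ∀ᶠ t in 𝓝[<] x, κ * (t - x) < f t - f x := by
  have hslope := (hasDerivWithinAt_iff_tendsto_slope' self_notMem_Iio).1 hf.hasDerivWithinAt
  filter_upwards [hslope.eventually (eventually_lt_nhds hκ), self_mem_nhdsWithin]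
    with t ht (htx : t < x)
  rwa [slope_def_field, div_lt_iff_of_neg (sub_neg.2 htx)] at ht

lemma _root_.ConcaveOn.differentiableWithinAt_Ioi_of_mem_interior {S : Set ℝ} {f : ℝ → ℝ} {x : ℝ}
    (hf : ConcaveOn ℝ S f) (hx : x ∈ interior S) : DifferentiableWithinAt ℝ f (Ioi x) x := by
  simpa using (hf.neg.differentiableWithinAt_Ioi_of_mem_interior hx).neg

lemma _root_.ConcaveOn.differentiableWithinAt_Iio_of_mem_interior {S : Set ℝ} {f : ℝ → ℝ} {x : ℝ}
    (hf : ConcaveOn ℝ S f) (hx : x ∈ interior S) : DifferentiableWithinAt ℝ f (Iio x) x := by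
  simpa using (hf.neg.differentiableWithinAt_Iio_of_mem_interior hx).neg

lemma tendsto_exp_mul_natCast_of_neg {u : ℕ → ℝ} {a : ℝ} (hu : Tendsto u atTop (𝓝 a))
    (ha : a < 0) : Tendsto (fun n : ℕ => Real.exp (u n * n)) atTop (𝓝 0) :=
  Real.tendsto_exp_atBot.comp (hu.neg_mul_atTop ha tendsto_natCast_atTop_atTop)

lemma AnShape.tendsto_hitProb_deviation {d : ℕ} {Ω : Type*} [MeasurableSpace Ω] {P : Measure Ω}
    {φ : ℝ → ℝ} {S : ℕ → Ω → Fin d → ℤ} {β : ℝ → (Fin d → ℝ) → ℝ}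
    (hβshape : AnShape P φ S β) (hβnorm : ∀ lam : ℝ, 0 ≤ lam → IsNorm (β lam))
    {ys : ℕ → Fin d → ℤ} {y : Fin d → ℝ} (hy : y ≠ 0)
    (hys : Tendsto (fun n : ℕ => fun i => ((ys n i : ℝ) / n)) atTop (𝓝 y))
    {l t κ : ℝ} (hl : 0 ≤ l) (ht : 0 ≤ t) (hκ : κ * (t - l) < β t y - β l y) :
    Tendsto (fun n : ℕ => hitProb P φ S (ys n) l
        {ω | (l - t) * κ ≤ (l - t) * ((hitTime S (ys n) ω : ℝ) / n)}) atTop (𝓝 0) := by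
  set b : ℝ → ℕ → ℝ := fun s n => twoPointB P φ S s (ys n)
  have hrate : Tendsto (fun n : ℕ => b l n / n - b t n / n - (l - t) * κ) atTop
      (𝓝 (β l y - β t y - (l - t) * κ)) :=
    ((hβshape.tendsto_twoPointB_div hl (hβnorm l hl) hy hys).sub
      (hβshape.tendsto_twoPointB_div ht (hβnorm t ht) hy hys)).sub_const _
  have hbound : ∀ᶠ n : ℕ in atTop, hitProb P φ S (ys n) l
      {ω | (l - t) * κ ≤ (l - t) * ((hitTime S (ys n) ω : ℝ) / n)} ≤
        Real.exp ((b l n / n - b t n / n - (l - t) * κ) * n) := by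
    filter_upwards [hβshape.eventually_hitPartition_pos hl (hβnorm l hl) hy hys,
      hβshape.eventually_hitPartition_pos ht (hβnorm t ht) hy hys, eventually_gt_atTop 0]
      with n hZl hZt hn
    have hn' : (0 : ℝ) < n := Nat.cast_pos.2 hn
    have hchernoff := integral_indicator_hitWeight_le (l := l) (c := (l - t) * κ * n)
      (Integrable.of_integral_ne_zero hZt.ne') fun ω (hω : (l - t) * κ ≤ _) => by
        calc (l - t) * κ * n ≤ (l - t) * ((hitTime S (ys n) ω : ℝ) / n) * n := by gcongr
          _ = (l - t) * hitTime S (ys n) ω := by field_simp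
    change _ / hitPartition P φ S (ys n) l ≤ _
    rw [div_le_iff₀ hZl]
    refine hchernoff.trans_eq ?_
    rw [hitPartition_eq_exp_neg_twoPointB hZl, hitPartition_eq_exp_neg_twoPointB hZt,
      ← Real.exp_add, ← Real.exp_add]
    congr 1
    field_simp
    ring
  exact squeeze_zero' (Eventually.of_forall fun n => hitProb_nonneg l _) hbound
    (tendsto_exp_mul_natCast_of_neg hrate (by linarith))

theorem tilted_hitting_time_LLN_general
    {d : ℕ}
    {Ω : Type*} [MeasurableSpace Ω] (P : Measure Ω)
    (S : ℕ → Ω → Fin d → ℤ) (hS : IsSRW P S)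
    (φ : ℝ → ℝ)
    (β : ℝ → (Fin d → ℝ) → ℝ)
    (hβnorm : ∀ lam : ℝ, 0 ≤ lam → IsNorm (β lam))
    (hβconc : ∀ x : Fin d → ℝ, ConcaveOn ℝ (Ici 0) (fun lam => β lam x))
    (hβshape : AnShape P φ S β)
    (ys : ℕ → Fin d → ℤ) (y : Fin d → ℝ) (hy : y ≠ 0)
    (hys : Tendsto (fun n : ℕ => fun i => ((ys n i : ℝ) / n)) atTop (𝓝 y))
    (lam : ℝ) (hlam : 0 < lam) (γ δ : ℝ)
    (hγ : γ < derivWithin (fun l => β l y) (Ioi lam) lam)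
    (hδ : derivWithin (fun l => β l y) (Iio lam) lam < δ) :
    Tendsto (fun n : ℕ => hitProb P φ S (ys n) lam
        {ω | γ ≤ (hitTime S (ys n) ω : ℝ) / n ∧ (hitTime S (ys n) ω : ℝ) / n ≤ δ})
      atTop (𝓝 1) := by
  have hlam' : lam ∈ interior (Ici (0 : ℝ)) := by rwa [interior_Ici]
  obtain ⟨t₂, hγt₂, hlamt₂ : lam < t₂⟩ := ((eventually_mul_sub_lt_of_lt_derivWithin_Ioi
    ((hβconc y).differentiableWithinAt_Ioi_of_mem_interior hlam') hγ).and
      self_mem_nhdsWithin).exists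
  obtain ⟨t₁, hδt₁, ht₁ : t₁ ∈ Ioo 0 lam⟩ := ((eventually_mul_sub_lt_of_derivWithin_Iio_lt
    ((hβconc y).differentiableWithinAt_Iio_of_mem_interior hlam') hδ).and
      (Ioo_mem_nhdsLT hlam)).exists
  have hshort :=
    hβshape.tendsto_hitProb_deviation hβnorm hy hys hlam.le (hlam.trans hlamt₂).le hγt₂
  have hlong := hβshape.tendsto_hitProb_deviation hβnorm hy hys hlam.le ht₁.1.le hδt₁
  have hH : ∀ n : ℕ, Measurable fun ω => (hitTime S (ys n) ω : ℝ) / n := fun n =>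
    (measurable_from_nat.comp (measurable_hitTime hS.2.1 (ys n))).div_const _
  refine tendsto_of_tendsto_of_tendsto_of_le_of_le' (by simpa using (hshort.add hlong).const_sub 1)
    tendsto_const_nhds ?_ (Eventually.of_forall fun n => hitProb_le_one lam _)
  filter_upwards [hβshape.eventually_hitPartition_pos hlam.le (hβnorm lam hlam.le) hy hys]
    with n hZ
  refine one_sub_le_hitProb_of_compl_subset hZ
    ((measurableSet_le measurable_const (hH n)).inter (measurableSet_le (hH n) measurable_const))
    (measurableSet_le measurable_const ((hH n).const_mul _))
    (measurableSet_le measurable_const ((hH n).const_mul _)) fun ω hω => ?_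
  rcases lt_or_ge ((hitTime S (ys n) ω : ℝ) / n) γ with hfast | hnotfast
  · exact Or.inl (mul_le_mul_of_nonpos_left hfast.le (sub_nonpos.2 hlamt₂.le))
  · refine Or.inr (mul_le_mul_of_nonneg_left ?_ (sub_nonneg.2 ht₁.2.le))
    exact (not_le.1 fun hslow => hω ⟨hnotfast, hslow⟩).le

/-- **Law of large numbers under the tilted measures** (Flury, Lemma 6). If `y_n/n → y ≠ 0`,
then for every `λ > 0` and all `γ < ∂⁺_λ β_λ(y) ≤ ∂⁻_λ β_λ(y) < δ` one has
`P^{y_n}_λ[H(y_n)/n ∈ [γ, δ]] → 1`. -/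
theorem tilted_hitting_time_LLN
    {d : ℕ} (hd : 0 < d)
    {Ω : Type*} [MeasurableSpace Ω] (P : Measure Ω) [IsProbabilityMeasure P]
    (S : ℕ → Ω → Fin d → ℤ) (hS : IsSRW P S)
    (φ : ℝ → ℝ) (hφ : IsGoodPhi φ)
    (β : ℝ → (Fin d → ℝ) → ℝ)
    (hβnorm : ∀ lam : ℝ, 0 ≤ lam → IsNorm (β lam))
    (hβconc : ∀ x : Fin d → ℝ, ConcaveOn ℝ (Ici 0) (fun lam => β lam x))
    (hβshape : AnShape P φ S β)
    (ys : ℕ → Fin d → ℤ) (y : Fin d → ℝ) (hy : y ≠ 0)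
    (hys : Tendsto (fun n : ℕ => fun i => ((ys n i : ℝ) / n)) atTop (𝓝 y))
    (lam : ℝ) (hlam : 0 < lam) (γ δ : ℝ)
    (hγ : γ < derivWithin (fun l => β l y) (Ioi lam) lam)
    (hmid : derivWithin (fun l => β l y) (Ioi lam) lam ≤
      derivWithin (fun l => β l y) (Iio lam) lam)
    (hδ : derivWithin (fun l => β l y) (Iio lam) lam < δ) :
    Tendsto (fun n : ℕ => hitProb P φ S (ys n) lam
        {ω | γ ≤ (hitTime S (ys n) ω : ℝ) / n ∧ (hitTime S (ys n) ω : ℝ) / n ≤ δ})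
      atTop (𝓝 1) :=
  tilted_hitting_time_LLN_general P S hS φ β hβnorm hβconc hβshape ys y hy hys lam hlam γ δ hγ hδ

end RWRP
end
end

section
/- The function J(x) = sup_{λ≥0}(β_λ(x) − λ) on ℝ^d is lower semicontinuous and convex, its effective domain D_J = {x ∈ ℝ^d : J(x) < ∞} equals the closed unit ball of the 1-norm {x : ‖x‖₁ ≤ 1}, J is continuous on D_J, and J is a good rate function, i.e. its level sets {x : J(x) ≤ c} are compact for every c ∈ ℝ. -/
open MeasureTheory ProbabilityTheory Filter Topology Set Pointwise

noncomputable section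

namespace RWRP

/-! The ℓ¹ ball is a polytope, so it is locally a cone at each of its points: near `x`, the ray
from `x` through any `y` of the ball stays in the ball for a length `ρ` independent of `y`.
Writing `y` as a convex combination of `x` and the far end `w` of that ray, with weight
`‖y - x‖₁ / ρ` on `w`, a convex function bounded above by `M` on the ball satisfies
`f y ≤ f x + ‖y - x‖₁ / ρ * (M - f x)`, hence is upper semicontinuous on the ball.

The rate function is a supremum of the continuous convex functions `β_λ - λ`, hence lower
semicontinuous and convex. The bounds on `β_λ` make it `+∞` outside the ℓ¹ ball (the lower bound
grows like `λ (‖x‖₁ - 1)`) and bounded on the ball. On the ball it is therefore a bounded convex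
real function, continuous by the above; its level sets are closed subsets of the compact ball. -/

section L1Ball

variable {d : ℕ}

lemma norm1R_nonneg (x : Fin d → ℝ) : 0 ≤ norm1R x :=
  Finset.sum_nonneg fun _ _ => abs_nonneg _

lemma norm1R_eq_zero {x : Fin d → ℝ} (hx : norm1R x = 0) : x = 0 := by
  funext i
  exact abs_eq_zero.1 <|
    (Finset.sum_eq_zero_iff_of_nonneg fun j _ => abs_nonneg (x j)).1 hx i (Finset.mem_univ i)

lemma norm1R_smul (c : ℝ) (x : Fin d → ℝ) : norm1R (c • x) = |c| * norm1R x := by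
  simp only [norm1R, Finset.mul_sum, Pi.smul_apply, smul_eq_mul, abs_mul]

lemma norm1R_add_le (x y : Fin d → ℝ) : norm1R (x + y) ≤ norm1R x + norm1R y := by
  rw [norm1R, norm1R, norm1R, ← Finset.sum_add_distrib]
  exact Finset.sum_le_sum fun i _ => abs_add_le _ _

lemma abs_le_norm1R (x : Fin d → ℝ) (i : Fin d) : |x i| ≤ norm1R x :=
  Finset.single_le_sum (fun j _ => abs_nonneg (x j)) (Finset.mem_univ i)

lemma continuous_norm1R : Continuous (norm1R (d := d)) :=
  continuous_finsetSum _ fun i _ => (continuous_apply i).abs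

lemma norm1R_zero : norm1R (0 : Fin d → ℝ) = 0 := by simp [norm1R]

variable (d) in
def l1Ball : Set (Fin d → ℝ) := {x | norm1R x ≤ 1}

lemma mem_l1Ball {x : Fin d → ℝ} : x ∈ l1Ball d ↔ norm1R x ≤ 1 := Iff.rfl

variable (d) in
lemma convex_l1Ball : Convex ℝ (l1Ball d) := by
  intro x hx y hy a b ha hb hab
  calc norm1R (a • x + b • y) ≤ a * norm1R x + b * norm1R y := by
        simpa only [norm1R_smul, abs_of_nonneg ha, abs_of_nonneg hb] using
          norm1R_add_le (a • x) (b • y)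
    _ ≤ a * 1 + b * 1 := by gcongr <;> assumption
    _ = 1 := by rw [mul_one, mul_one, hab]

variable (d) in
lemma isCompact_l1Ball : IsCompact (l1Ball d) := by
  refine Metric.isCompact_of_isClosed_isBounded
    (isClosed_le continuous_norm1R continuous_const) ?_
  refine (Metric.isBounded_closedBall (x := 0) (r := 1)).subset fun x hx => ?_
  rw [mem_closedBall_zero_iff, pi_norm_le_iff_of_nonneg zero_le_one]
  exact fun i => (abs_le_norm1R x i).trans hx

lemma abs_add_mul_sub_le {a b c : ℝ} (hc : 0 ≤ c) (hsign : 0 ≤ a * (a + c * (b - a))) :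
    |a + c * (b - a)| ≤ |a| + c * (|b| - |a|) := by
  rcases lt_trichotomy a 0 with ha | rfl | ha
  · rw [abs_of_nonpos (nonpos_of_mul_nonneg_right hsign ha), abs_of_neg ha]
    nlinarith [neg_abs_le b]
  · simp [abs_mul, abs_of_nonneg hc]
  · rw [abs_of_nonneg (nonneg_of_mul_nonneg_right hsign ha), abs_of_pos ha]
    nlinarith [le_abs_self b]

lemma norm1R_add_smul_sub_le {x y : Fin d → ℝ} {c : ℝ} (hc : 0 ≤ c)
    (hsign : ∀ i, 0 ≤ x i * (x i + c * (y i - x i))) :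
    norm1R (x + c • (y - x)) ≤ norm1R x + c * (norm1R y - norm1R x) := by
  simp only [norm1R, Finset.mul_sum, ← Finset.sum_sub_distrib, ← Finset.sum_add_distrib]
  exact Finset.sum_le_sum fun i _ => abs_add_mul_sub_le hc (hsign i)

lemma exists_pos_add_smul_sub_mem_l1Ball {x : Fin d → ℝ} (hx : x ∈ l1Ball d) :
    ∃ ρ > 0, ∀ y ∈ l1Ball d, ∀ c : ℝ, 0 ≤ c → c * norm1R (y - x) ≤ ρ →
      x + c • (y - x) ∈ l1Ball d := by
  rcases (mem_l1Ball.1 hx).lt_or_eq with hx | hx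
  · refine ⟨1 - norm1R x, sub_pos.2 hx, fun y _ c hc hcy => ?_⟩
    calc norm1R (x + c • (y - x)) ≤ norm1R x + c * norm1R (y - x) := by
          simpa only [norm1R_smul, abs_of_nonneg hc] using norm1R_add_le x (c • (y - x))
      _ ≤ 1 := by linarith
  · -- On the sphere the ray must keep the signs of the nonzero coordinates of `x`.
    obtain ⟨ρ, hρx, hρ⟩ : ∃ ρ, (∀ i, x i ≠ 0 → ρ ≤ |x i|) ∧ 0 < ρ := by
      refine ((Filter.eventually_all.2 fun i => ?_).and self_mem_nhdsWithin).exists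
        (f := 𝓝[>] (0 : ℝ))
      by_cases hxi : x i = 0
      · exact Eventually.of_forall fun _ h => (h hxi).elim
      · exact nhdsWithin_le_nhds ((eventually_le_nhds (abs_pos.2 hxi)).mono fun _ h _ => h)
    refine ⟨ρ, hρ, fun y hy c hc hcy => ?_⟩
    have hsign : ∀ i, 0 ≤ x i * (x i + c * (y i - x i)) := by
      intro i
      by_cases hxi : x i = 0
      · simp [hxi]
      have hstep : c * |y i - x i| ≤ |x i| :=
        (mul_le_mul_of_nonneg_left (abs_le_norm1R (y - x) i) hc).trans (hcy.trans (hρx i hxi))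
      nlinarith [abs_mul_abs_self (x i), neg_abs_le (x i * (y i - x i)), abs_mul (x i) (y i - x i),
        mul_nonneg (abs_nonneg (x i)) (sub_nonneg.2 hstep)]
    calc norm1R (x + c • (y - x)) ≤ norm1R x + c * (norm1R y - norm1R x) :=
          norm1R_add_smul_sub_le hc hsign
      _ ≤ 1 := by rw [← hx]; nlinarith [mem_l1Ball.1 hy]

end L1Ball

lemma _root_.ConvexOn.le_add_mul_sub {E : Type*} [AddCommGroup E] [Module ℝ E] {s : Set E}
    {f : E → ℝ} (hf : ConvexOn ℝ s f) {x y : E} {t : ℝ} (ht0 : 0 < t) (ht1 : t ≤ 1) (hx : x ∈ s)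
    (hw : x + t⁻¹ • (y - x) ∈ s) : f y ≤ f x + t * (f (x + t⁻¹ • (y - x)) - f x) := by
  have hy : (1 - t) • x + t • (x + t⁻¹ • (y - x)) = y := by
    rw [smul_add, smul_smul, mul_inv_cancel₀ ht0.ne', one_smul]
    module
  have h := hf.2 hx hw (sub_nonneg.2 ht1) ht0.le (sub_add_cancel 1 t)
  rw [hy, smul_eq_mul, smul_eq_mul] at h
  linarith

section ConvexOnL1Ball

variable {d : ℕ} {f : (Fin d → ℝ) → ℝ} {M : ℝ} {x : Fin d → ℝ}

lemma exists_le_add_norm1R_sub_mul_of_convexOn (hf : ConvexOn ℝ (l1Ball d) f)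
    (hM : ∀ w ∈ l1Ball d, f w ≤ M) (hx : x ∈ l1Ball d) :
    ∃ ρ > 0, ∀ y ∈ l1Ball d, norm1R (y - x) ≤ ρ →
      f y ≤ f x + norm1R (y - x) / ρ * (M - f x) := by
  obtain ⟨ρ, hρ, hcone⟩ := exists_pos_add_smul_sub_mem_l1Ball hx
  refine ⟨ρ, hρ, fun y hy hyx => ?_⟩
  rcases (norm1R_nonneg (y - x)).eq_or_lt with h0 | hpos
  · obtain rfl := sub_eq_zero.1 (norm1R_eq_zero h0.symm)
    rw [← h0, zero_div, zero_mul, add_zero]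
  have hw : x + (norm1R (y - x) / ρ)⁻¹ • (y - x) ∈ l1Ball d :=
    hcone y hy _ (by positivity) (by rw [inv_div, div_mul_cancel₀ _ hpos.ne'])
  calc f y ≤ f x + norm1R (y - x) / ρ * (f (x + (norm1R (y - x) / ρ)⁻¹ • (y - x)) - f x) :=
        hf.le_add_mul_sub (div_pos hpos hρ) ((div_le_one hρ).2 hyx) hx hw
    _ ≤ f x + norm1R (y - x) / ρ * (M - f x) := by gcongr; exact hM _ hw

lemma upperSemicontinuousWithinAt_of_convexOn_l1Ball (hf : ConvexOn ℝ (l1Ball d) f)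
    (hM : ∀ w ∈ l1Ball d, f w ≤ M) (hx : x ∈ l1Ball d) :
    UpperSemicontinuousWithinAt f (l1Ball d) x := by
  obtain ⟨ρ, hρ, hbound⟩ := exists_le_add_norm1R_sub_mul_of_convexOn hf hM hx
  intro b hb
  have hlim : Tendsto (fun y => norm1R (y - x)) (𝓝 x) (𝓝 0) := by
    have := ((continuous_norm1R (d := d)).comp (continuous_sub_right x)).tendsto x
    rwa [Function.comp_apply, sub_self, norm1R_zero] at this
  have hbound_lim : Tendsto (fun y => f x + norm1R (y - x) / ρ * (M - f x)) (𝓝 x) (𝓝 (f x)) := by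
    simpa using ((hlim.div_const ρ).mul_const (M - f x)).const_add (f x)
  filter_upwards [self_mem_nhdsWithin, nhdsWithin_le_nhds (hlim.eventually (ge_mem_nhds hρ)),
    nhdsWithin_le_nhds (hbound_lim.eventually (gt_mem_nhds hb))] with y hy hyx hyb
  exact (hbound y hy hyx).trans_lt hyb

end ConvexOnL1Ball

lemma IsNorm.map_smul_add_smul_le {d : ℕ} {f : (Fin d → ℝ) → ℝ} (hf : IsNorm f) {a b : ℝ}
    (ha : 0 ≤ a) (hb : 0 ≤ b) (x y : Fin d → ℝ) : f (a • x + b • y) ≤ a * f x + b * f y :=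
  calc f (a • x + b • y) ≤ f (a • x) + f (b • y) := hf.2.2.2 _ _
    _ = a * f x + b * f y := by rw [hf.2.2.1, hf.2.2.1, abs_of_nonneg ha, abs_of_nonneg hb]

section RateFunction

variable {d : ℕ} {β : ℝ → (Fin d → ℝ) → ℝ}

lemma coe_sub_le_rateFn {lam : ℝ} (hlam : 0 ≤ lam) (x : Fin d → ℝ) :
    ((β lam x - lam : ℝ) : EReal) ≤ rateFn β x :=
  le_iSup₂ (f := fun lam (_ : 0 ≤ lam) => ((β lam x - lam : ℝ) : EReal)) lam hlam

lemma rateFn_ne_bot (x : Fin d → ℝ) : rateFn β x ≠ ⊥ :=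
  ne_bot_of_le_ne_bot (EReal.coe_ne_bot _) (coe_sub_le_rateFn le_rfl x)

lemma lowerSemicontinuous_rateFn (hβ : ∀ lam, 0 ≤ lam → Continuous (β lam)) :
    LowerSemicontinuous (rateFn β) :=
  lowerSemicontinuous_iSup fun lam => lowerSemicontinuous_iSup fun hlam =>
    (continuous_coe_real_ereal.comp ((hβ lam hlam).sub continuous_const)).lowerSemicontinuous

lemma rateFn_smul_add_smul_le (hβ : ∀ lam, 0 ≤ lam → IsNorm (β lam)) (x y : Fin d → ℝ)
    {a b : ℝ} (ha : 0 ≤ a) (hb : 0 ≤ b) (hab : a + b = 1) :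
    rateFn β (a • x + b • y) ≤ (a : EReal) * rateFn β x + (b : EReal) * rateFn β y := by
  refine iSup₂_le fun lam hlam => ?_
  have hcomb : β lam (a • x + b • y) - lam ≤ a * (β lam x - lam) + b * (β lam y - lam) := by
    have := (hβ lam hlam).map_smul_add_smul_le ha hb x y
    linear_combination this + lam * hab
  calc ((β lam (a • x + b • y) - lam : ℝ) : EReal)
      ≤ (a : EReal) * ((β lam x - lam : ℝ) : EReal) +
          (b : EReal) * ((β lam y - lam : ℝ) : EReal) := by
        exact_mod_cast hcomb
    _ ≤ (a : EReal) * rateFn β x + (b : EReal) * rateFn β y := by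
        gcongr <;> exact coe_sub_le_rateFn hlam _

lemma rateFn_eq_top {k : ℝ} (hlow : ∀ lam, 0 ≤ lam → ∀ x, norm1R x * (lam + k) ≤ β lam x)
    {x : Fin d → ℝ} (hx : 1 < norm1R x) : rateFn β x = ⊤ := by
  refine EReal.eq_top_iff_forall_lt _ |>.2 fun r => ?_
  have hlim : Tendsto (fun lam => lam * (norm1R x - 1) + norm1R x * k) atTop atTop :=
    tendsto_atTop_add_const_right _ _ (tendsto_id.atTop_mul_const (sub_pos.2 hx))
  obtain ⟨lam, hr, hlam⟩ := ((hlim.eventually_gt_atTop r).and (eventually_ge_atTop 0)).exists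
  calc (r : EReal) < ((β lam x - lam : ℝ) : EReal) := by
        have := hlow lam hlam x
        exact_mod_cast (by linarith : r < β lam x - lam)
    _ ≤ rateFn β x := coe_sub_le_rateFn hlam x

lemma rateFn_le_abs {K : ℝ} (hup : ∀ lam, 0 ≤ lam → ∀ x, β lam x ≤ norm1R x * (lam + K))
    {x : Fin d → ℝ} (hx : x ∈ l1Ball d) : rateFn β x ≤ |K| := by
  refine iSup₂_le fun lam hlam => EReal.coe_le_coe_iff.2 ?_
  have hx1 := sub_nonneg.2 (mem_l1Ball.1 hx)
  linarith [hup lam hlam x, mul_nonneg hx1 hlam, mul_nonneg hx1 (abs_nonneg K),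
    mul_nonneg (norm1R_nonneg x) (sub_nonneg.2 (le_abs_self K))]

lemma setOf_rateFn_lt_top {k K : ℝ}
    (hlow : ∀ lam, 0 ≤ lam → ∀ x, norm1R x * (lam + k) ≤ β lam x)
    (hup : ∀ lam, 0 ≤ lam → ∀ x, β lam x ≤ norm1R x * (lam + K)) :
    {x | rateFn β x < ⊤} = l1Ball d := by
  ext x
  refine ⟨fun h => not_lt.1 fun hx => h.ne (rateFn_eq_top hlow hx), fun hx => ?_⟩
  exact (rateFn_le_abs hup hx).trans_lt (EReal.coe_lt_top _)

lemma continuousOn_rateFn {K : ℝ} (hcont : ∀ lam, 0 ≤ lam → Continuous (β lam))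
    (hnorm : ∀ lam, 0 ≤ lam → IsNorm (β lam))
    (hup : ∀ lam, 0 ≤ lam → ∀ x, β lam x ≤ norm1R x * (lam + K)) :
    ContinuousOn (rateFn β) (l1Ball d) := by
  set J := fun x => (rateFn β x).toReal
  have hJ : ∀ x ∈ l1Ball d, rateFn β x = J x := fun x hx =>
    (EReal.coe_toReal ((rateFn_le_abs hup hx).trans_lt (EReal.coe_lt_top _)).ne
      (rateFn_ne_bot x)).symm
  have hconv : ConvexOn ℝ (l1Ball d) J := by
    refine ⟨convex_l1Ball d, fun x hx y hy a b ha hb hab => ?_⟩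
    have := rateFn_smul_add_smul_le hnorm x y ha hb hab
    rw [hJ x hx, hJ y hy, hJ _ (convex_l1Ball d hx hy ha hb hab)] at this
    exact_mod_cast this
  have hbdd : ∀ x ∈ l1Ball d, J x ≤ |K| := fun x hx => by
    have := rateFn_le_abs hup hx
    rwa [hJ x hx, EReal.coe_le_coe_iff] at this
  have hlsc : ∀ x ∈ l1Ball d, LowerSemicontinuousWithinAt J (l1Ball d) x :=
      fun x hx b (hb : b < J x) => by
    have := lowerSemicontinuous_rateFn hcont x b
      (show (b : EReal) < rateFn β x by rw [hJ x hx]; exact_mod_cast hb)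
    filter_upwards [nhdsWithin_le_nhds this, self_mem_nhdsWithin] with y hy hyB
    rw [hJ y hyB] at hy
    exact_mod_cast hy
  refine (continuous_coe_real_ereal.comp_continuousOn fun x hx => ?_).congr hJ
  exact continuousWithinAt_iff_lower_upperSemicontinuousWithinAt.2
    ⟨hlsc x hx, upperSemicontinuousWithinAt_of_convexOn_l1Ball hconv hbdd hx⟩

lemma isCompact_setOf_rateFn_le {k : ℝ} (hcont : ∀ lam, 0 ≤ lam → Continuous (β lam))
    (hlow : ∀ lam, 0 ≤ lam → ∀ x, norm1R x * (lam + k) ≤ β lam x) (c : ℝ) :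
    IsCompact {x | rateFn β x ≤ c} := by
  refine (isCompact_l1Ball d).of_isClosed_subset
    ((lowerSemicontinuous_rateFn hcont).isClosed_preimage c)
    fun x hx => mem_l1Ball.2 <| not_lt.1 fun h => ?_
  change rateFn β x ≤ c at hx
  rw [rateFn_eq_top hlow h] at hx
  exact (EReal.coe_lt_top c).not_ge hx

end RateFunction

theorem annealed_rate_function_properties_general
    {d : ℕ}
    (φ : ℝ → ℝ)
    (β : ℝ → (Fin d → ℝ) → ℝ)
    (hβnorm : ∀ lam : ℝ, 0 ≤ lam → IsNorm (β lam))
    (hβcont : ContinuousOn (fun p : ℝ × (Fin d → ℝ) => β p.1 p.2) (Ici 0 ×ˢ univ))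
    (hβbounds : ∀ lam : ℝ, 0 ≤ lam → ∀ x : Fin d → ℝ,
      norm1R x * (lam + φ 1) ≤ β lam x ∧
        β lam x ≤ norm1R x * (lam + Real.log (2 * (d : ℝ)) + φ 1)) :
    LowerSemicontinuous (rateFn β) ∧
    (∀ x y : Fin d → ℝ, ∀ a b : ℝ, 0 ≤ a → 0 ≤ b → a + b = 1 →
      rateFn β (a • x + b • y) ≤
        ((a : ℝ) : EReal) * rateFn β x + ((b : ℝ) : EReal) * rateFn β y) ∧
    {x : Fin d → ℝ | rateFn β x < ⊤} = {x : Fin d → ℝ | norm1R x ≤ 1} ∧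
    ContinuousOn (rateFn β) {x : Fin d → ℝ | norm1R x ≤ 1} ∧
    ∀ c : ℝ, IsCompact {x : Fin d → ℝ | rateFn β x ≤ (c : EReal)} := by
  have hcont : ∀ lam, 0 ≤ lam → Continuous (β lam) := fun lam hlam =>
    hβcont.comp_continuous (continuous_const.prodMk continuous_id) fun _ => ⟨hlam, trivial⟩
  have hlow : ∀ lam, 0 ≤ lam → ∀ x, norm1R x * (lam + φ 1) ≤ β lam x :=
    fun lam hlam x => (hβbounds lam hlam x).1
  have hup : ∀ lam, 0 ≤ lam → ∀ x, β lam x ≤ norm1R x * (lam + (Real.log (2 * d) + φ 1)) :=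
    fun lam hlam x => add_assoc lam _ _ ▸ (hβbounds lam hlam x).2
  exact ⟨lowerSemicontinuous_rateFn hcont,
    fun x y a b ha hb hab => rateFn_smul_add_smul_le hβnorm x y ha hb hab,
    setOf_rateFn_lt_top hlow hup, continuousOn_rateFn hcont hβnorm hup,
    isCompact_setOf_rateFn_le hcont hlow⟩

/-- **Properties of the annealed rate function** (Flury, Section 4). The rate function
`J(x) = sup_{λ ≥ 0}(β_λ(x) − λ)` is lower semicontinuous and convex, its effective
domain is the closed `ℓ¹` unit ball, `J` is continuous there, and `J` is a good rate
function: its level sets are compact. -/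
theorem annealed_rate_function_properties
    {d : ℕ} (hd : 0 < d)
    (φ : ℝ → ℝ) (hφ : IsGoodPhi φ)
    (β : ℝ → (Fin d → ℝ) → ℝ)
    (hβnorm : ∀ lam : ℝ, 0 ≤ lam → IsNorm (β lam))
    (hβcont : ContinuousOn (fun p : ℝ × (Fin d → ℝ) => β p.1 p.2) (Ici 0 ×ˢ univ))
    (hβconc : ∀ x : Fin d → ℝ, ConcaveOn ℝ (Ici 0) (fun lam => β lam x))
    (hβmono : ∀ x : Fin d → ℝ, MonotoneOn (fun lam => β lam x) (Ici 0))
    (hβbounds : ∀ lam : ℝ, 0 ≤ lam → ∀ x : Fin d → ℝ,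
      norm1R x * (lam + φ 1) ≤ β lam x ∧
        β lam x ≤ norm1R x * (lam + Real.log (2 * (d : ℝ)) + φ 1)) :
    LowerSemicontinuous (rateFn β) ∧
    (∀ x y : Fin d → ℝ, ∀ a b : ℝ, 0 ≤ a → 0 ≤ b → a + b = 1 →
      rateFn β (a • x + b • y) ≤
        ((a : ℝ) : EReal) * rateFn β x + ((b : ℝ) : EReal) * rateFn β y) ∧
    {x : Fin d → ℝ | rateFn β x < ⊤} = {x : Fin d → ℝ | norm1R x ≤ 1} ∧
    ContinuousOn (rateFn β) {x : Fin d → ℝ | norm1R x ≤ 1} ∧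
    ∀ c : ℝ, IsCompact {x : Fin d → ℝ | rateFn β x ≤ (c : EReal)} :=
  annealed_rate_function_properties_general φ β hβnorm hβcont hβbounds

end RWRP
end
end
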